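/- Let f(x) = x² − x − 3 and, for n ≥ 1, let Δₙ = aₙ + bₙ + cₙ be the adjacency matrix of the level-n Schreier graph of the Hanoi Towers group on three pegs. Then a real number λ is an eigenvalue of Δₙ if and only if λ = 3, or f^i(λ) = 0 for some 0 ≤ i ≤ n−1, or f^j(λ) = −2 for some 0 ≤ j ≤ n−2; that is, the spectrum of Δₙ, as a set, equals {3} ∪ ⋃_{i=0}^{n−1} f^{−i}(0) ∪ ⋃_{j=0}^{n−2} f^{−j}(−2). -/

import Mathlib

/-- Generator matrix `aₙ` (size `3ⁿ × 3ⁿ`, indexed by ternary words of length `n`):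
`a₀ = [1]`, `a_{n+1} = [[0ₙ,1ₙ,0ₙ],[1ₙ,0ₙ,0ₙ],[0ₙ,0ₙ,aₙ]]` in block form. -/
noncomputable def hanoiGenA : (n : ℕ) → Matrix (Fin n → Fin 3) (Fin n → Fin 3) ℝ
  | 0 => 1
  | n + 1 => Matrix.of fun u v =>
      (![![0, 1, 0],
         ![1, 0, 0],
         ![0, 0, hanoiGenA n]] :
        Fin 3 → Fin 3 → Matrix (Fin n → Fin 3) (Fin n → Fin 3) ℝ)
        (u 0) (v 0) (Fin.tail u) (Fin.tail v)

/-- `b₀ = [1]`, `b_{n+1} = [[0ₙ,0ₙ,1ₙ],[0ₙ,bₙ,0ₙ],[1ₙ,0ₙ,0ₙ]]`. -/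
noncomputable def hanoiGenB : (n : ℕ) → Matrix (Fin n → Fin 3) (Fin n → Fin 3) ℝ
  | 0 => 1
  | n + 1 => Matrix.of fun u v =>
      (![![0, 0, 1],
         ![0, hanoiGenB n, 0],
         ![1, 0, 0]] :
        Fin 3 → Fin 3 → Matrix (Fin n → Fin 3) (Fin n → Fin 3) ℝ)
        (u 0) (v 0) (Fin.tail u) (Fin.tail v)

/-- `c₀ = [1]`, `c_{n+1} = [[cₙ,0ₙ,0ₙ],[0ₙ,0ₙ,1ₙ],[0ₙ,1ₙ,0ₙ]]`. -/
noncomputable def hanoiGenC : (n : ℕ) → Matrix (Fin n → Fin 3) (Fin n → Fin 3) ℝ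
  | 0 => 1
  | n + 1 => Matrix.of fun u v =>
      (![![hanoiGenC n, 0, 0],
         ![0, 0, 1],
         ![0, 1, 0]] :
        Fin 3 → Fin 3 → Matrix (Fin n → Fin 3) (Fin n → Fin 3) ℝ)
        (u 0) (v 0) (Fin.tail u) (Fin.tail v)

/-- The adjacency matrix `Δₙ = aₙ + bₙ + cₙ` of the level-`n` Schreier graph `Γₙ`
of the Hanoi Towers group on three pegs. -/
noncomputable def hanoiAdj (n : ℕ) : Matrix (Fin n → Fin 3) (Fin n → Fin 3) ℝ :=
  hanoiGenA n + hanoiGenB n + hanoiGenC n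

/-- The quadratic polynomial `f(x) = x² - x - 3`. -/
noncomputable def hanoiF (x : ℝ) : ℝ := x ^ 2 - x - 3

/-!
Split a vector on words of length `n + 1` into three blocks `x₀, x₁, x₂` according to the first
letter. In this decomposition `Δₙ₊₁ = [[cₙ,1,1],[1,bₙ,1],[1,1,aₙ]]`, and `aₙ, bₙ, cₙ` are
involutions. If `Δₙ₊₁ x = μ x`, then `s = x₀ + x₁ + x₂` satisfies `Δₙ s = f(μ) s`; conversely an
eigenvector `w` of `Δₙ` for `f(μ)` lifts to `(cₙw + (μ+1)w, bₙw + (μ+1)w, aₙw + (μ+1)w)`. Neither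
vector can vanish unless `μ + 1 = ±1` is an eigenvalue of an involution, i.e. `μ ∈ {0, -2}`. Hence
`μ ∈ σ(Δₙ₊₁) ↔ μ = 0 ∨ f(μ) ∈ σ(Δₙ)` for `n ≥ 1`, the eigenvalues `0` and `-2` having explicit
eigenvectors and `f(-2) = 3` being the eigenvalue of the constant vector. The induction starts
from `Δ₁`, the all-ones `3 × 3` matrix, whose spectrum is `{0, 3}`.
-/

open Matrix

section BlockEigen

variable {K V : Type*} [Field K] [AddCommGroup V] [Module K V]

theorem Function.Involutive.eq_zero_of_apply_eq_smul {C : V →ₗ[K] V}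
    (hC : Function.Involutive C) {c : K} {x : V} (hx : C x = c • x) (hc₁ : c ≠ 1)
    (hc₂ : c ≠ -1) : x = 0 := by
  have h : (c * c - 1) • x = 0 := by
    have := hC x
    rw [hx, map_smul, hx, smul_smul] at this
    rw [sub_smul, this, one_smul, sub_self]
  refine (smul_eq_zero.mp h).resolve_left fun hcc => ?_
  rcases mul_self_eq_one_iff.mp (sub_eq_zero.mp hcc) with h | h
  exacts [hc₁ h, hc₂ h]

/-- `x` solves `T x = μ x` for the block operator `T = [[C,1,1],[1,B,1],[1,1,A]]` on `V³`;
this is the shape of `Δₙ₊₁` with `A, B, C = aₙ, bₙ, cₙ`. -/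
def IsBlockEigen (A B C : V →ₗ[K] V) (μ : K) (x : Fin 3 → V) : Prop :=
  C (x 0) + x 1 + x 2 = μ • x 0 ∧ x 0 + B (x 1) + x 2 = μ • x 1 ∧
    x 0 + x 1 + A (x 2) = μ • x 2

variable {A B C : V →ₗ[K] V} {μ : K}

theorem IsBlockEigen.apply_sum_eq_smul (hA : Function.Involutive A)
    (hB : Function.Involutive B) (hC : Function.Involutive C) {x : Fin 3 → V}
    (h : IsBlockEigen A B C μ x) :
    (A + B + C) (x 0 + x 1 + x 2) = (μ ^ 2 - μ - 3) • (x 0 + x 1 + x 2) := by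
  obtain ⟨h₀, h₁, h₂⟩ := h
  have e₀ := congrArg C h₀
  have e₁ := congrArg B h₁
  have e₂ := congrArg A h₂
  simp only [map_add, map_smul, hA (x 2), hB (x 1), hC (x 0)] at e₀ e₁ e₂
  simp only [LinearMap.add_apply, map_add]
  linear_combination (norm := module) e₀ + e₁ + e₂ + (μ + 1) • (h₀ + h₁ + h₂)

theorem IsBlockEigen.eq_zero_of_sum_eq_zero (hA : Function.Involutive A)
    (hB : Function.Involutive B) (hC : Function.Involutive C) (hμ₀ : μ ≠ 0) (hμ₂ : μ ≠ -2)
    {x : Fin 3 → V} (h : IsBlockEigen A B C μ x) (hS : x 0 + x 1 + x 2 = 0) : x = 0 := by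
  obtain ⟨h₀, h₁, h₂⟩ := h
  have hc₁ : μ + 1 ≠ 1 := by simpa using hμ₀
  have hc₂ : μ + 1 ≠ -1 := fun h => hμ₂ (by linear_combination h)
  have z₀ := hC.eq_zero_of_apply_eq_smul (by linear_combination (norm := module) h₀ - hS) hc₁ hc₂
  have z₁ := hB.eq_zero_of_apply_eq_smul (by linear_combination (norm := module) h₁ - hS) hc₁ hc₂
  have z₂ := hA.eq_zero_of_apply_eq_smul (by linear_combination (norm := module) h₂ - hS) hc₁ hc₂
  ext1 k
  fin_cases k <;> assumption

theorem isBlockEigen_of_apply_eq_smul (hA : Function.Involutive A)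
    (hB : Function.Involutive B) (hC : Function.Involutive C) {w : V}
    (hw : (A + B + C) w = (μ ^ 2 - μ - 3) • w) :
    IsBlockEigen A B C μ ![C w + (μ + 1) • w, B w + (μ + 1) • w, A w + (μ + 1) • w] := by
  simp only [LinearMap.add_apply] at hw
  refine ⟨?_, ?_, ?_⟩ <;>
  simp only [Matrix.cons_val, map_add, map_smul, hA w, hB w, hC w] <;>
  linear_combination (norm := module) hw

theorem isBlockEigen_of_sum_eq_zero {x : Fin 3 → V} (h₀ : C (x 0) = (μ + 1) • x 0)
    (h₁ : B (x 1) = (μ + 1) • x 1) (h₂ : A (x 2) = (μ + 1) • x 2)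
    (hS : x 0 + x 1 + x 2 = 0) : IsBlockEigen A B C μ x :=
  ⟨by linear_combination (norm := module) h₀ + hS, by linear_combination (norm := module) h₁ + hS,
    by linear_combination (norm := module) h₂ + hS⟩

theorem exists_isBlockEigen_iff (hA : Function.Involutive A) (hB : Function.Involutive B)
    (hC : Function.Involutive C) (hμ₀ : μ ≠ 0) (hμ₂ : μ ≠ -2) :
    (∃ x ≠ 0, IsBlockEigen A B C μ x) ↔ ∃ w ≠ 0, (A + B + C) w = (μ ^ 2 - μ - 3) • w := by
  constructor
  · rintro ⟨x, hx₀, hx⟩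
    exact ⟨_, fun hS => hx₀ (hx.eq_zero_of_sum_eq_zero hA hB hC hμ₀ hμ₂ hS),
      hx.apply_sum_eq_smul hA hB hC⟩
  · rintro ⟨w, hw₀, hw⟩
    refine ⟨_, fun hx => hw₀ ?_, isBlockEigen_of_apply_eq_smul hA hB hC hw⟩
    have hCw : C w = -(μ + 1) • w := by
      have := congrFun hx 0
      simp only [Matrix.cons_val_zero, Pi.zero_apply] at this
      linear_combination (norm := module) this
    exact hC.eq_zero_of_apply_eq_smul hCw (fun h => hμ₂ (by linear_combination -h))
      (fun h => hμ₀ (by linear_combination -h))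

end BlockEigen

theorem Matrix.mem_spectrum_iff_exists_mulVec_eq_smul {K m : Type*} [Field K] [Fintype m]
    [DecidableEq m] (A : Matrix m m K) (μ : K) :
    μ ∈ spectrum K A ↔ ∃ v ≠ 0, A *ᵥ v = μ • v := by
  rw [← spectrum_toLin', ← Module.End.hasEigenvalue_iff_mem_spectrum,
    Module.End.hasEigenvalue_iff, Submodule.ne_bot_iff]
  simp [and_comm]

theorem Matrix.eq_zero_or_eq_card_of_mem_spectrum_allOnes {K m : Type*} [Field K] [Fintype m]
    [DecidableEq m] {μ : K} (hμ : μ ∈ spectrum K (of fun _ _ : m => (1 : K))) :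
    μ = 0 ∨ μ = Fintype.card m := by
  obtain ⟨v, hv, h⟩ := (mem_spectrum_iff_exists_mulVec_eq_smul _ μ).mp hμ
  have hrow : ∀ u, ∑ w, v w = μ * v u := fun u => by
    simpa [mulVec, dotProduct] using congrFun h u
  by_cases hs : ∑ w, v w = 0
  · left
    obtain ⟨u, hu⟩ := Function.ne_iff.mp hv
    have := hrow u
    rw [hs, eq_comm, mul_eq_zero] at this
    exact this.resolve_right hu
  · right
    have : (Fintype.card m : K) * ∑ w, v w = μ * ∑ w, v w := by
      simp [Finset.mul_sum, ← hrow]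
    exact (mul_right_cancel₀ hs this).symm

section Words

variable {α R : Type*}

theorem Fin.exists_ne_zero_cons_iff [Zero R] {n : ℕ} {P : (α → (Fin n → α) → R) → Prop} :
    (∃ v : (Fin (n + 1) → α) → R, v ≠ 0 ∧ P fun k t => v (Fin.cons k t)) ↔ ∃ x ≠ 0, P x := by
  constructor
  · rintro ⟨v, hv, hP⟩
    refine ⟨_, fun hx => hv ?_, hP⟩
    funext u
    exact Fin.consCases (fun k t => congrFun (congrFun hx k) t) u
  · rintro ⟨x, hx, hP⟩
    refine ⟨fun u => x (u 0) (Fin.tail u), fun hv => hx ?_, by simpa using hP⟩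
    funext k t
    simpa using congrFun hv (Fin.cons k t)

variable [Fintype α] [Semiring R]

theorem mulVec_of_blocks_cons {n : ℕ}
    (M : α → α → Matrix (Fin n → α) (Fin n → α) R) (v : (Fin (n + 1) → α) → R)
    (j : α) (t : Fin n → α) :
    ((of fun u w : Fin (n + 1) → α => M (u 0) (w 0) (Fin.tail u) (Fin.tail w)) *ᵥ v)
        (Fin.cons j t) = ∑ k, (M j k *ᵥ fun s => v (Fin.cons k s)) t := by
  simp only [mulVec, dotProduct, of_apply, Fin.cons_zero, Fin.tail_cons]
  rw [← (Fin.consEquiv fun _ => α).sum_comp, Fintype.sum_prod_type]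
  simp [Fin.consEquiv]

variable [DecidableEq α]

structure IsHanoiGen (X : ∀ n, Matrix (Fin n → α) (Fin n → α) R) (p : α) (σ : α → α) :
    Prop where
  involutive : Function.Involutive σ
  map_fixed : σ p = p
  zero : X 0 = 1
  mulVec_succ (n : ℕ) (v : (Fin (n + 1) → α) → R) (j : α) (t : Fin n → α) :
    (X (n + 1) *ᵥ v) (Fin.cons j t) =
      if j = p then (X n *ᵥ fun s => v (Fin.cons p s)) t else v (Fin.cons (σ j) t)

namespace IsHanoiGen

variable {X : ∀ n, Matrix (Fin n → α) (Fin n → α) R} {p : α} {σ : α → α}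

theorem involutive_mulVec (h : IsHanoiGen X p σ) (n : ℕ) :
    Function.Involutive (X n *ᵥ ·) := by
  induction n with
  | zero => simp [Function.Involutive, h.zero]
  | succ n ih =>
    intro v
    funext u
    refine Fin.consCases (fun j t => ?_) u
    dsimp only
    rw [h.mulVec_succ]
    split_ifs with hj
    · subst hj
      simp only [h.mulVec_succ, if_true]
      exact congrFun (ih _) t
    · rw [h.mulVec_succ, if_neg, h.involutive]
      exact fun hσ => hj (by rw [← h.involutive j, hσ, h.map_fixed])

theorem mulVec_const (h : IsHanoiGen X p σ) (n : ℕ) (c : R) :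
    X n *ᵥ (fun _ => c) = fun _ => c := by
  induction n with
  | zero => simp [h.zero]
  | succ n ih =>
    funext u
    refine Fin.consCases (fun j t => ?_) u
    rw [h.mulVec_succ]
    split_ifs
    · rw [ih]
    · rfl

theorem mulVec_head (h : IsHanoiGen X p σ) (n : ℕ) (g : α → R) :
    X (n + 1) *ᵥ (fun u => g (u 0)) = fun u => g (σ (u 0)) := by
  funext u
  refine Fin.consCases (fun j t => ?_) u
  rw [h.mulVec_succ]
  split_ifs with hj
  · simp [h.mulVec_const, hj, h.map_fixed]
  · simp

end IsHanoiGen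

end Words

theorem isHanoiGen_hanoiGenA : IsHanoiGen hanoiGenA 2 ![1, 0, 2] where
  involutive := by unfold Function.Involutive; decide
  map_fixed := rfl
  zero := rfl
  mulVec_succ n v j t := by
    rw [hanoiGenA, mulVec_of_blocks_cons]
    fin_cases j <;> simp [Fin.sum_univ_three]

theorem isHanoiGen_hanoiGenB : IsHanoiGen hanoiGenB 1 ![2, 1, 0] where
  involutive := by unfold Function.Involutive; decide
  map_fixed := rfl
  zero := rfl
  mulVec_succ n v j t := by
    rw [hanoiGenB, mulVec_of_blocks_cons]
    fin_cases j <;> simp [Fin.sum_univ_three]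

theorem isHanoiGen_hanoiGenC : IsHanoiGen hanoiGenC 0 ![0, 2, 1] where
  involutive := by unfold Function.Involutive; decide
  map_fixed := rfl
  zero := rfl
  mulVec_succ n v j t := by
    rw [hanoiGenC, mulVec_of_blocks_cons]
    fin_cases j <;> simp [Fin.sum_univ_three]

theorem hanoiAdj_succ_mulVec_eq_smul_iff {n : ℕ} (v : (Fin (n + 1) → Fin 3) → ℝ) (μ : ℝ) :
    hanoiAdj (n + 1) *ᵥ v = μ • v ↔
      IsBlockEigen (hanoiGenA n).mulVecLin (hanoiGenB n).mulVecLin (hanoiGenC n).mulVecLin μ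
        fun k t => v (Fin.cons k t) := by
  simp only [IsBlockEigen, funext_iff, Fin.forall_fin_succ_pi, hanoiAdj, add_mulVec,
    Pi.add_apply, Pi.smul_apply, isHanoiGen_hanoiGenA.mulVec_succ,
    isHanoiGen_hanoiGenB.mulVec_succ, isHanoiGen_hanoiGenC.mulVec_succ, mulVecLin_apply,
    Fin.forall_fin_succ]
  simp [← forall_and, add_assoc, add_comm, add_left_comm]

theorem mem_spectrum_hanoiAdj_iff {n : ℕ} {μ : ℝ} :
    μ ∈ spectrum ℝ (hanoiAdj n) ↔
      ∃ w ≠ 0, ((hanoiGenA n).mulVecLin + (hanoiGenB n).mulVecLin + (hanoiGenC n).mulVecLin) w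
        = μ • w := by
  simp [mem_spectrum_iff_exists_mulVec_eq_smul, hanoiAdj, add_mulVec]

theorem mem_spectrum_hanoiAdj_succ_iff {n : ℕ} {μ : ℝ} :
    μ ∈ spectrum ℝ (hanoiAdj (n + 1)) ↔
      ∃ x ≠ 0, IsBlockEigen (hanoiGenA n).mulVecLin (hanoiGenB n).mulVecLin
        (hanoiGenC n).mulVecLin μ x := by
  simp only [mem_spectrum_iff_exists_mulVec_eq_smul, hanoiAdj_succ_mulVec_eq_smul_iff]
  exact Fin.exists_ne_zero_cons_iff

theorem three_mem_spectrum_hanoiAdj (n : ℕ) : (3 : ℝ) ∈ spectrum ℝ (hanoiAdj n) := by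
  refine (mem_spectrum_iff_exists_mulVec_eq_smul _ _).mpr ⟨fun _ => 1, ?_, ?_⟩
  · exact Function.ne_iff.mpr ⟨fun _ => 0, one_ne_zero⟩
  · simp only [hanoiAdj, add_mulVec, isHanoiGen_hanoiGenA.mulVec_const,
      isHanoiGen_hanoiGenB.mulVec_const, isHanoiGen_hanoiGenC.mulVec_const]
    funext
    norm_num

theorem zero_mem_spectrum_hanoiAdj_succ (n : ℕ) : (0 : ℝ) ∈ spectrum ℝ (hanoiAdj (n + 1)) := by
  refine mem_spectrum_hanoiAdj_succ_iff.mpr ⟨fun k _ => ![1, -1, 0] k, ?_, ?_⟩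
  · exact Function.ne_iff.mpr ⟨0, Function.ne_iff.mpr ⟨fun _ => 0, by simp⟩⟩
  · refine isBlockEigen_of_sum_eq_zero ?_ ?_ ?_ ?_
    all_goals ext
    all_goals simp [isHanoiGen_hanoiGenA.mulVec_const, isHanoiGen_hanoiGenB.mulVec_const,
      isHanoiGen_hanoiGenC.mulVec_const]

theorem neg_two_mem_spectrum_hanoiAdj (n : ℕ) : (-2 : ℝ) ∈ spectrum ℝ (hanoiAdj (n + 2)) := by
  -- blocks `0, 1, 2` depend only on the first letter and are `(-1)`-eigenvectors of
  -- `cₙ₊₁, bₙ₊₁, aₙ₊₁` respectively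
  refine mem_spectrum_hanoiAdj_succ_iff.mpr
    ⟨fun k s => ![![0, 1, -1], ![-1, 0, 1], ![1, -1, 0]] k (s 0), ?_, ?_⟩
  · exact Function.ne_iff.mpr ⟨0, Function.ne_iff.mpr ⟨fun _ => 1, by simp⟩⟩
  · refine isBlockEigen_of_sum_eq_zero ?_ ?_ ?_ ?_
    all_goals
      ext s
      simp only [mulVecLin_apply, isHanoiGen_hanoiGenA.mulVec_head,
        isHanoiGen_hanoiGenB.mulVec_head, isHanoiGen_hanoiGenC.mulVec_head, Pi.add_apply,
        Pi.smul_apply, Pi.zero_apply]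
      generalize s 0 = j
      fin_cases j <;> simp <;> norm_num

theorem hanoiAdj_one : hanoiAdj 1 = of fun _ _ => 1 := by
  ext u w
  refine Fin.consCases (fun j s => ?_) u
  refine Fin.consCases (fun k s' => ?_) w
  obtain rfl : s = s' := Subsingleton.elim _ _
  simp only [hanoiAdj, hanoiGenA, hanoiGenB, hanoiGenC, Matrix.add_apply, of_apply, Fin.cons_zero,
    Fin.tail_cons]
  fin_cases j <;> fin_cases k <;> simp [-cons_val, cons_val_two, vecHead, vecTail]

theorem mem_spectrum_hanoiAdj_one {μ : ℝ} : μ ∈ spectrum ℝ (hanoiAdj 1) ↔ μ = 0 ∨ μ = 3 := by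
  refine ⟨fun h => ?_, ?_⟩
  · rw [hanoiAdj_one] at h
    simpa using eq_zero_or_eq_card_of_mem_spectrum_allOnes h
  · rintro (rfl | rfl)
    · exact zero_mem_spectrum_hanoiAdj_succ 0
    · exact three_mem_spectrum_hanoiAdj 1

theorem hanoiF_eq_three_iff {x : ℝ} : hanoiF x = 3 ↔ x = 3 ∨ x = -2 := by
  have : hanoiF x - 3 = (x - 3) * (x + 2) := by unfold hanoiF; ring
  rw [← sub_eq_zero, this, mul_eq_zero, sub_eq_zero, add_eq_zero_iff_eq_neg]

theorem mem_spectrum_hanoiAdj_succ {n : ℕ} (hn : 1 ≤ n) {μ : ℝ} :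
    μ ∈ spectrum ℝ (hanoiAdj (n + 1)) ↔ μ = 0 ∨ hanoiF μ ∈ spectrum ℝ (hanoiAdj n) := by
  by_cases hμ₀ : μ = 0
  · simp [hμ₀, zero_mem_spectrum_hanoiAdj_succ]
  by_cases hμ₂ : μ = -2
  · obtain ⟨m, rfl⟩ := Nat.exists_eq_add_of_le' hn
    simp [hμ₂, neg_two_mem_spectrum_hanoiAdj, hanoiF_eq_three_iff.mpr,
      three_mem_spectrum_hanoiAdj]
  rw [mem_spectrum_hanoiAdj_succ_iff,
    exists_isBlockEigen_iff (isHanoiGen_hanoiGenA.involutive_mulVec n)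
      (isHanoiGen_hanoiGenB.involutive_mulVec n) (isHanoiGen_hanoiGenC.involutive_mulVec n)
      hμ₀ hμ₂,
    mem_spectrum_hanoiAdj_iff]
  simp [hμ₀, hanoiF]

theorem eq_three_or_exists_iterate_hanoiF_succ_iff {n : ℕ} (hn : 1 ≤ n) {x : ℝ} :
    (x = 3 ∨ (∃ i, i + 1 ≤ n + 1 ∧ hanoiF^[i] x = 0) ∨
        ∃ j, j + 2 ≤ n + 1 ∧ hanoiF^[j] x = -2) ↔
      x = 0 ∨ hanoiF x = 3 ∨ (∃ i, i + 1 ≤ n ∧ hanoiF^[i] (hanoiF x) = 0) ∨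
        ∃ j, j + 2 ≤ n ∧ hanoiF^[j] (hanoiF x) = -2 := by
  constructor
  · rintro (rfl | ⟨_ | i, hi, h⟩ | ⟨_ | j, hj, h⟩)
    · exact Or.inr (Or.inl (hanoiF_eq_three_iff.mpr (Or.inl rfl)))
    · exact Or.inl h
    · exact Or.inr (Or.inr (Or.inl ⟨i, by omega, h⟩))
    · exact Or.inr (Or.inl (hanoiF_eq_three_iff.mpr (Or.inr h)))
    · exact Or.inr (Or.inr (Or.inr ⟨j, by omega, h⟩))
  · rintro (h | h | ⟨i, hi, h⟩ | ⟨j, hj, h⟩)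
    · exact Or.inr (Or.inl ⟨0, by omega, h⟩)
    · rcases hanoiF_eq_three_iff.mp h with h | h
      · exact Or.inl h
      · exact Or.inr (Or.inr ⟨0, by omega, h⟩)
    · exact Or.inr (Or.inl ⟨i + 1, by omega, h⟩)
    · exact Or.inr (Or.inr ⟨j + 1, by omega, h⟩)

theorem hanoiAdj_spectrum (n : ℕ) (hn : 1 ≤ n) (lam : ℝ) :
    lam ∈ spectrum ℝ (hanoiAdj n) ↔
      lam = 3 ∨ (∃ i : ℕ, i + 1 ≤ n ∧ hanoiF^[i] lam = 0) ∨
        ∃ j : ℕ, j + 2 ≤ n ∧ hanoiF^[j] lam = -2 := by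
  induction n, hn using Nat.le_induction generalizing lam with
  | base =>
    have hi : ∀ i, i + 1 ≤ 1 ↔ i = 0 := fun i => by omega
    simp [mem_spectrum_hanoiAdj_one, hi, or_comm]
  | succ n hn ih =>
    rw [mem_spectrum_hanoiAdj_succ hn, ih, eq_three_or_exists_iterate_hanoiF_succ_iff hn]
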